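/- Let N ≥ 1 and let Cl be the Clifford algebra over ℂ^{2N} with respect to the quadratic form Q(x) = Σ_{i=1}^{2N} x_i², with canonical embedding ι : ℂ^{2N} → Cl (so ι(v)·ι(v) = Q(v)·1). For n = 1,…,N set c_n = ½(ι(e_{2n−1}) + i·ι(e_{2n})) and c_n* = ½(ι(e_{2n−1}) − i·ι(e_{2n})). For matrices α, β, γ ∈ Mat_N(ℂ) with βᵀ = −β and γᵀ = −γ, define 𝐀(α,β,γ) = ½·Σ_{n,m=1}^N ( α_{nm}·c_n*·c_m + β_{nm}·c_n*·c_m* + γ_{nm}·c_n·c_m − α_{mn}·c_n·c_m* ) ∈ Cl. Then for all such triples (α,β,γ) and (α',β',γ'), the commutator satisfies ⁅𝐀(α,β,γ), 𝐀(α',β',γ')⁆ = 𝐀(α'', β'', γ'') with α'' = [α,α'] + βγ' − β'γ, β'' = αβ' + β'αᵀ − α'β − β(α')ᵀ, and γ'' = γα' + (α')ᵀγ − γ'α − αᵀγ'; in other words, the map [[α, β],[γ, −αᵀ]] ↦ 𝐀(α,β,γ) is a Lie algebra homomorphism. -/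

import Mathlib

noncomputable section
open Matrix

/-- The quadratic form Q(x) = Σᵢ xᵢ² on ℂ^{2N}. -/
noncomputable def QF (N : ℕ) : QuadraticForm ℂ (Fin (2 * N) → ℂ) :=
  QuadraticMap.weightedSumSquares ℂ (fun _ : Fin (2 * N) => (1 : ℂ))

/-- The annihilation operator c_n = ½(ι(e_{2n-1}) + i·ι(e_{2n})) (1-based indices). -/
noncomputable def cAnn (N : ℕ) (n : Fin N) : CliffordAlgebra (QF N) :=
  (2 : ℂ)⁻¹ •
    (CliffordAlgebra.ι (QF N) (Pi.single (⟨2 * (n : ℕ), by have := n.isLt; omega⟩ : Fin (2 * N)) 1) +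
      Complex.I •
        CliffordAlgebra.ι (QF N) (Pi.single (⟨2 * (n : ℕ) + 1, by have := n.isLt; omega⟩ : Fin (2 * N)) 1))

/-- The creation operator c_n* = ½(ι(e_{2n-1}) - i·ι(e_{2n})) (1-based indices). -/
noncomputable def cCre (N : ℕ) (n : Fin N) : CliffordAlgebra (QF N) :=
  (2 : ℂ)⁻¹ •
    (CliffordAlgebra.ι (QF N) (Pi.single (⟨2 * (n : ℕ), by have := n.isLt; omega⟩ : Fin (2 * N)) 1) -
      Complex.I •
        CliffordAlgebra.ι (QF N) (Pi.single (⟨2 * (n : ℕ) + 1, by have := n.isLt; omega⟩ : Fin (2 * N)) 1))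

/-- The quadratic-Hamiltonian second quantization
𝐀(α,β,γ) = ½·Σ_{n,m} (α_{nm} c_n* c_m + β_{nm} c_n* c_m* + γ_{nm} c_n c_m - α_{mn} c_n c_m*). -/
noncomputable def quadHam (N : ℕ) (α β γ : Matrix (Fin N) (Fin N) ℂ) :
    CliffordAlgebra (QF N) :=
  (2 : ℂ)⁻¹ •
    ∑ n : Fin N, ∑ m : Fin N,
      (α n m • (cCre N n * cAnn N m) + β n m • (cCre N n * cCre N m) +
        γ n m • (cAnn N n * cAnn N m) - α m n • (cAnn N n * cCre N m))

/-! Collect the modes as d = (c*, c), indexed by `Fin N ⊕ Fin N`. The canonical anticommutation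
relations then read d_x d_y + d_y d_x = κ_xy with κ = [[0, 1], [1, 0]], and
𝐀(α, β, γ) = ½ Σ (H κ)_xy d_x d_y for the block matrix H = [[α, β], [γ, -αᵀ]]. Moving one
generator through a quadratic monomial twice expresses [d_a d_b, d_c d_e] through quadratic
monomials with κ-coefficients; by bilinearity, and since H' κ is antisymmetric, this gives
[½ L(H κ), ½ L(H' κ)] = ½ L([H, H'] κ) for L(M) = Σ M_xy d_x d_y. The block computation of
[H, H'] identifies it with the matrix of (α'', β'', γ''). -/

section QuadraticElement

variable {R A I : Type*} [CommRing R] [Ring A] [Algebra R A]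

def quadElem [Fintype I] (d : I → A) : Matrix I I R →ₗ[R] A where
  toFun M := ∑ i, ∑ j, M i j • (d i * d j)
  map_add' M M' := by simp only [Matrix.add_apply, add_smul, Finset.sum_add_distrib]
  map_smul' r M := by simp only [Matrix.smul_apply, smul_eq_mul, mul_smul, Finset.smul_sum,
    RingHom.id_apply]

theorem quadElem_apply [Fintype I] (d : I → A) (M : Matrix I I R) :
    quadElem d M = ∑ i, ∑ j, M i j • (d i * d j) := rfl

theorem quadElem_single [Fintype I] [DecidableEq I] (d : I → A) (i j : I) (r : R) :
    quadElem d (single i j r) = r • (d i * d j) := by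
  simp [quadElem_apply, single_apply, ite_and]

variable {d : I → A} {κ : Matrix I I R}

theorem mul_mul_eq_of_anticomm (hκ : ∀ x y, d x * d y + d y * d x = κ x y • (1 : A))
    (a b c : I) : d a * (d b * d c) = κ a b • d c - κ a c • d b + d b * d c * d a := by
  have h : ∀ x y, d x * d y = κ x y • (1 : A) - d y * d x := fun x y =>
    eq_sub_of_add_eq (hκ x y)
  calc d a * (d b * d c) = (κ a b • (1 : A) - d b * d a) * d c := by rw [← mul_assoc, h a b]
    _ = κ a b • d c - d b * (κ a c • (1 : A) - d c * d a) := by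
        rw [sub_mul, smul_mul_assoc, one_mul, mul_assoc, h a c]
    _ = κ a b • d c - κ a c • d b + d b * d c * d a := by
        rw [mul_sub, mul_smul_comm, mul_one, mul_assoc]; abel

theorem commutator_mul_mul_of_anticomm (hκ : ∀ x y, d x * d y + d y * d x = κ x y • (1 : A))
    (a b c e : I) :
    d a * d b * (d c * d e) - d c * d e * (d a * d b) =
      κ b c • (d a * d e) - κ b e • (d a * d c) +
        (κ a c • (d e * d b) - κ a e • (d c * d b)) := by
  rw [mul_assoc, mul_mul_eq_of_anticomm hκ b c e, mul_add, mul_sub, mul_smul_comm,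
    mul_smul_comm, ← mul_assoc (d a) (d c * d e), mul_mul_eq_of_anticomm hκ a c e]
  simp only [add_mul, sub_mul, smul_mul_assoc, mul_assoc]
  abel

theorem quadElem_commutator [Fintype I] [DecidableEq I]
    (hκ : ∀ x y, d x * d y + d y * d x = κ x y • (1 : A)) (M M' : Matrix I I R) :
    quadElem d M * quadElem d M' - quadElem d M' * quadElem d M =
      quadElem d (M * κ * M' - M * κ * M'ᵀ + M'ᵀ * κᵀ * M - M' * κᵀ * M) := by
  induction M using Matrix.induction_on' with
  | h_zero => simp
  | h_add P P' hP hP' =>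
    rw [map_add, add_mul, mul_add, add_sub_add_comm, hP, hP', ← map_add]
    congr 1
    simp only [Matrix.add_mul, Matrix.mul_add]
    abel
  | h_std_basis a b r =>
    induction M' using Matrix.induction_on' with
    | h_zero => simp
    | h_add P P' hP hP' =>
      rw [map_add, add_mul, mul_add, add_sub_add_comm, hP, hP', ← map_add]
      congr 1
      simp only [transpose_add, Matrix.add_mul, Matrix.mul_add]
      abel
    | h_std_basis c e s =>
      rw [quadElem_single, quadElem_single, smul_mul_smul_comm, smul_mul_smul_comm, mul_comm s,
        ← smul_sub, commutator_mul_mul_of_anticomm hκ]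
      simp only [transpose_single, single_mul_mul_single, transpose_apply, map_add, map_sub,
        quadElem_single]
      module

theorem quadElem_commutator_of_transpose_eq_neg [Fintype I] [DecidableEq I]
    (hκ : ∀ x y, d x * d y + d y * d x = κ x y • (1 : A)) (hκs : κᵀ = κ)
    (M : Matrix I I R) {M' : Matrix I I R} (hM' : M'ᵀ = -M') :
    quadElem d M * quadElem d M' - quadElem d M' * quadElem d M =
      (2 : R) • quadElem d (M * κ * M' - M' * κ * M) := by
  rw [quadElem_commutator hκ, hM', hκs, two_smul, ← map_add]
  congr 1
  noncomm_ring

section SecondQuantization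

variable {K : Type*} [Field K] [Algebra K A] [Fintype I] [DecidableEq I]

def secondQuant (d : I → A) (κ H : Matrix I I K) : A :=
  (2 : K)⁻¹ • quadElem d (H * κ)

theorem secondQuant_commutator {d : I → A} {κ : Matrix I I K}
    (hκ : ∀ x y, d x * d y + d y * d x = κ x y • (1 : A)) (hκs : κᵀ = κ) (hκκ : κ * κ = 1)
    (H : Matrix I I K) {H' : Matrix I I K} (hH' : (H' * κ)ᵀ = -(H' * κ)) :
    secondQuant d κ H * secondQuant d κ H' - secondQuant d κ H' * secondQuant d κ H =
      secondQuant d κ (H * H' - H' * H) := by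
  have hinv : (2 : K)⁻¹ * (2 : K)⁻¹ * 2 = (2 : K)⁻¹ := by
    rcases eq_or_ne (2 : K) 0 with h | h
    · simp [h]
    · field_simp
  have hmat : H * κ * κ * (H' * κ) - H' * κ * κ * (H * κ) = (H * H' - H' * H) * κ := by
    simp only [Matrix.mul_assoc, hκκ, Matrix.mul_one, Matrix.sub_mul]
  simp only [secondQuant, smul_mul_smul_comm, ← smul_sub,
    quadElem_commutator_of_transpose_eq_neg hκ hκs _ hH', smul_smul, hinv, hmat]

end SecondQuantization

end QuadraticElement

theorem fromBlocks_mul_fromBlocks_zero_one_one_zero {R n : Type*} [CommRing R] [Fintype n]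
    [DecidableEq n] (A B C D : Matrix n n R) :
    fromBlocks A B C D * fromBlocks 0 1 1 0 = fromBlocks B A D C := by
  simp [fromBlocks_multiply]

theorem fromBlocks_commutator {R n : Type*} [CommRing R] [Fintype n]
    (α β γ α' β' γ' : Matrix n n R)
    (hβ : βᵀ = -β) (hγ : γᵀ = -γ) (hβ' : β'ᵀ = -β') (hγ' : γ'ᵀ = -γ') :
    fromBlocks α β γ (-αᵀ) * fromBlocks α' β' γ' (-α'ᵀ) -
        fromBlocks α' β' γ' (-α'ᵀ) * fromBlocks α β γ (-αᵀ) =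
      fromBlocks (α * α' - α' * α + (β * γ' - β' * γ))
        (α * β' + β' * αᵀ - α' * β - β * α'ᵀ)
        (γ * α' + α'ᵀ * γ - γ' * α - αᵀ * γ')
        (-(α * α' - α' * α + (β * γ' - β' * γ))ᵀ) := by
  rw [fromBlocks_multiply, fromBlocks_multiply, sub_eq_add_neg, fromBlocks_neg, fromBlocks_add,
    fromBlocks_inj]
  refine ⟨by noncomm_ring, by noncomm_ring, by noncomm_ring, ?_⟩
  simp only [transpose_add, transpose_sub, transpose_mul, hβ, hγ, hβ', hγ']
  noncomm_ring

theorem polar_weightedSumSquares_one {ι R : Type*} [Fintype ι] [CommRing R] (x y : ι → R) :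
    QuadraticMap.polar (QuadraticMap.weightedSumSquares R (fun _ : ι => (1 : R))) x y =
      2 * (x ⬝ᵥ y) := by
  simp only [QuadraticMap.polar, QuadraticMap.weightedSumSquares_apply, one_smul, Pi.add_apply,
    dotProduct, Finset.mul_sum, ← Finset.sum_sub_distrib]
  exact Finset.sum_congr rfl fun i _ => by ring

def modeVec (N : ℕ) : Fin N ⊕ Fin N → Fin (2 * N) → ℂ :=
  Sum.elim
    (fun n => (2 : ℂ)⁻¹ •
      (Pi.single ⟨2 * n, by omega⟩ 1 - Complex.I • Pi.single ⟨2 * n + 1, by omega⟩ 1))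
    (fun n => (2 : ℂ)⁻¹ •
      (Pi.single ⟨2 * n, by omega⟩ 1 + Complex.I • Pi.single ⟨2 * n + 1, by omega⟩ 1))

theorem two_mul_modeVec_dotProduct (N : ℕ) (x y : Fin N ⊕ Fin N) :
    2 * (modeVec N x ⬝ᵥ modeVec N y) = (fromBlocks 0 1 1 0 : Matrix _ _ ℂ) x y := by
  rcases x with n | n <;> rcases y with m | m <;>
  · simp only [modeVec, Sum.elim_inl, Sum.elim_inr, dotProduct_add, dotProduct_sub,
      add_dotProduct, sub_dotProduct, dotProduct_smul, smul_dotProduct, single_dotProduct,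
      Pi.single_apply, Fin.ext_iff, fromBlocks_apply₁₁, fromBlocks_apply₁₂, fromBlocks_apply₂₁,
      fromBlocks_apply₂₂, one_apply, Matrix.zero_apply]
    split_ifs <;> first | omega | norm_num [Complex.ext_iff]

theorem cCre_eq_ι (N : ℕ) (n : Fin N) :
    cCre N n = CliffordAlgebra.ι (QF N) (modeVec N (.inl n)) := by
  simp [cCre, modeVec]

theorem cAnn_eq_ι (N : ℕ) (n : Fin N) :
    cAnn N n = CliffordAlgebra.ι (QF N) (modeVec N (.inr n)) := by
  simp [cAnn, modeVec]

theorem ι_modeVec_anticomm (N : ℕ) (x y : Fin N ⊕ Fin N) :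
    CliffordAlgebra.ι (QF N) (modeVec N x) * CliffordAlgebra.ι (QF N) (modeVec N y) +
      CliffordAlgebra.ι (QF N) (modeVec N y) * CliffordAlgebra.ι (QF N) (modeVec N x) =
      (fromBlocks 0 1 1 0 : Matrix _ _ ℂ) x y • 1 := by
  rw [CliffordAlgebra.ι_mul_ι_add_swap, QF, polar_weightedSumSquares_one,
    two_mul_modeVec_dotProduct, Algebra.algebraMap_eq_smul_one]

theorem quadHam_eq_secondQuant (N : ℕ) (α β γ : Matrix (Fin N) (Fin N) ℂ) :
    quadHam N α β γ =
      secondQuant (fun x => CliffordAlgebra.ι (QF N) (modeVec N x)) (fromBlocks 0 1 1 0)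
        (fromBlocks α β γ (-αᵀ)) := by
  simp only [quadHam, secondQuant, fromBlocks_mul_fromBlocks_zero_one_one_zero, quadElem_apply,
    cCre_eq_ι, cAnn_eq_ι, Fintype.sum_sum_type, fromBlocks_apply₁₁, fromBlocks_apply₁₂,
    fromBlocks_apply₂₁, fromBlocks_apply₂₂, Matrix.neg_apply, transpose_apply, neg_smul,
    sub_eq_add_neg, Finset.sum_add_distrib, Finset.sum_neg_distrib]
  congr 1
  abel

theorem quadratic_commutator_identity_general (N : ℕ)
    (α β γ α' β' γ' : Matrix (Fin N) (Fin N) ℂ)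
    (hβ : βᵀ = -β) (hγ : γᵀ = -γ) (hβ' : β'ᵀ = -β') (hγ' : γ'ᵀ = -γ') :
    quadHam N α β γ * quadHam N α' β' γ' - quadHam N α' β' γ' * quadHam N α β γ =
      quadHam N (α * α' - α' * α + (β * γ' - β' * γ))
        (α * β' + β' * αᵀ - α' * β - β * α'ᵀ)
        (γ * α' + α'ᵀ * γ - γ' * α - αᵀ * γ') ∧
    Matrix.fromBlocks (α * α' - α' * α + (β * γ' - β' * γ))
        (α * β' + β' * αᵀ - α' * β - β * α'ᵀ)
        (γ * α' + α'ᵀ * γ - γ' * α - αᵀ * γ')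
        (-(α * α' - α' * α + (β * γ' - β' * γ))ᵀ) =
      Matrix.fromBlocks α β γ (-αᵀ) * Matrix.fromBlocks α' β' γ' (-α'ᵀ) -
        Matrix.fromBlocks α' β' γ' (-α'ᵀ) * Matrix.fromBlocks α β γ (-αᵀ) := by
  have hcomm := fromBlocks_commutator α β γ α' β' γ' hβ hγ hβ' hγ'
  refine ⟨?_, hcomm.symm⟩
  have hκs : (fromBlocks 0 1 1 0 : Matrix (Fin N ⊕ Fin N) (Fin N ⊕ Fin N) ℂ)ᵀ =
      fromBlocks 0 1 1 0 := by
    simp [fromBlocks_transpose]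
  have hκκ : (fromBlocks 0 1 1 0 : Matrix (Fin N ⊕ Fin N) (Fin N ⊕ Fin N) ℂ) *
      fromBlocks 0 1 1 0 = 1 := by
    rw [fromBlocks_mul_fromBlocks_zero_one_one_zero, fromBlocks_one]
  have hH' : (fromBlocks α' β' γ' (-α'ᵀ) * fromBlocks 0 1 1 0)ᵀ =
      -(fromBlocks α' β' γ' (-α'ᵀ) * fromBlocks 0 1 1 0) := by
    simp [fromBlocks_mul_fromBlocks_zero_one_one_zero, fromBlocks_transpose, fromBlocks_neg, hβ',
      hγ']
  rw [quadHam_eq_secondQuant, quadHam_eq_secondQuant, quadHam_eq_secondQuant, ← hcomm]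
  exact secondQuant_commutator (ι_modeVec_anticomm N) hκs hκκ _ hH'

/-- Proposition C.1: the commutator of two quadratic Hamiltonians is the
quadratic Hamiltonian of the matrix commutator, i.e. [[α,β],[γ,-αᵀ]] ↦ 𝐀(α,β,γ) is a Lie
algebra homomorphism. -/
theorem quadratic_commutator_identity (N : ℕ) (hN : 1 ≤ N)
    (α β γ α' β' γ' : Matrix (Fin N) (Fin N) ℂ)
    (hβ : βᵀ = -β) (hγ : γᵀ = -γ) (hβ' : β'ᵀ = -β') (hγ' : γ'ᵀ = -γ') :
    quadHam N α β γ * quadHam N α' β' γ' - quadHam N α' β' γ' * quadHam N α β γ =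
      quadHam N (α * α' - α' * α + (β * γ' - β' * γ))
        (α * β' + β' * αᵀ - α' * β - β * α'ᵀ)
        (γ * α' + α'ᵀ * γ - γ' * α - αᵀ * γ') ∧
    Matrix.fromBlocks (α * α' - α' * α + (β * γ' - β' * γ))
        (α * β' + β' * αᵀ - α' * β - β * α'ᵀ)
        (γ * α' + α'ᵀ * γ - γ' * α - αᵀ * γ')
        (-(α * α' - α' * α + (β * γ' - β' * γ))ᵀ) =
      Matrix.fromBlocks α β γ (-αᵀ) * Matrix.fromBlocks α' β' γ' (-α'ᵀ) -
        Matrix.fromBlocks α' β' γ' (-α'ᵀ) * Matrix.fromBlocks α β γ (-αᵀ) :=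
  quadratic_commutator_identity_general N α β γ α' β' γ' hβ hγ hβ' hγ'
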